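/- arXiv:2404.11546 — 5 statements merged into one kernel-verified Lean document; each statement's English description precedes it below -/
import Mathlib

section
/- If 0 < α < π/6 and 0 < λ ≤ 1/2 satisfy √λ < cos(π/3 + α)/cos(π/3 − α), then cos α / λ − sin α/(√3 λ) − cos α ≥ √3 sin α / (1 − λ). -/
open Real

theorem stmt_1 (α lam : ℝ) (hα : 0 < α) (hα6 : α < π / 6)
    (hl : 0 < lam) (hl2 : lam ≤ 1 / 2)
    (hcond : Real.sqrt lam < Real.cos (π / 3 + α) / Real.cos (π / 3 - α)) :
    Real.sqrt 3 * Real.sin α / (1 - lam) ≤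
      Real.cos α / lam - Real.sin α / (Real.sqrt 3 * lam) - Real.cos α := by
  have hπ := Real.pi_pos
  have hc : 0 < Real.cos α := Real.cos_pos_of_mem_Ioo ⟨by linarith, by linarith⟩
  have hs : 0 < Real.sin α := Real.sin_pos_of_pos_of_lt_pi hα (by linarith)
  have h3 : (0:ℝ) < Real.sqrt 3 := by positivity
  have h33 : Real.sqrt 3 * Real.sqrt 3 = 3 := Real.mul_self_sqrt (by norm_num)
  set c := Real.cos α with hcdef
  set s := Real.sin α with hsdef
  set d := Real.sqrt 3 * s with hddef
  have e2 : Real.cos (π/3 + α) = (c - d)/2 := by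
    rw [Real.cos_add, Real.cos_pi_div_three, Real.sin_pi_div_three]; ring
  have e3 : Real.cos (π/3 - α) = (c + d)/2 := by
    rw [Real.cos_sub, Real.cos_pi_div_three, Real.sin_pi_div_three]; ring
  have hpos2 : 0 < Real.cos (π/3 + α) := Real.cos_pos_of_mem_Ioo ⟨by linarith, by linarith⟩
  have hpos3 : 0 < Real.cos (π/3 - α) := Real.cos_pos_of_mem_Ioo ⟨by linarith, by linarith⟩
  have hcd : 0 < c - d := by rw [e2] at hpos2; linarith
  have hcd' : 0 < c + d := by rw [e3] at hpos3; linarith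
  have hsq : Real.sqrt lam * (c + d) < c - d := by
    rw [e2, e3, lt_div_iff₀ (by positivity)] at hcond
    nlinarith [hcond]
  have hsqlam : (Real.sqrt lam) ^ 2 = lam := Real.sq_sqrt hl.le
  have hlam2 : lam * (c + d) ^ 2 < (c - d) ^ 2 := by
    have ha : 0 ≤ Real.sqrt lam * (c + d) := by positivity
    have h2 := mul_lt_mul' hsq.le hsq ha hcd
    nlinarith [h2, hsqlam]
  have hl1 : lam < 1 := by linarith
  have hdpos : 0 < d := by positivity
  have key : 3 * d * lam ≤ (3 * c - d - 3 * c * lam) * (1 - lam) := by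
    nlinarith [hlam2,
      mul_nonneg (mul_nonneg (sq_nonneg c) (by linarith : (0:ℝ) ≤ 2 - 3 * lam))
        (by linarith : (0:ℝ) ≤ 1 - lam),
      mul_nonneg hdpos.le hcd.le,
      mul_nonneg (sq_nonneg d) hl.le]
  have e4 : c / lam - s / (Real.sqrt 3 * lam) - c
      = (3 * c - d - 3 * c * lam) / (3 * lam) := by
    rw [hddef]
    field_simp
    ring_nf
    rw [Real.sq_sqrt (by norm_num : (0:ℝ) ≤ 3)]
    ring
  rw [e4, div_le_div_iff₀ (by linarith) (by positivity)]
  linarith [key]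
end

section
/- Let Γ = (V, E) be a finite graph, V₀ ⊆ V, and let φ, ψ : V → ℝ^d be two immersions with ℓ(φ) < ∞ that agree on V₀ and are both local minima of the length functional ℓ(χ) = Σ_{{v,w}∈E} |χ(v) − χ(w)| among immersions agreeing with them on V₀. Then ℓ(φ) = ℓ(ψ), and for every edge {v,w} ∈ E either φ(v) = φ(w), or ψ(v) = ψ(w), or there exists t > 0 with φ(v) − φ(w) = t(ψ(v) − ψ(w)). -/
open scoped BigOperators

/-- Length of an immersion of a finite (multi)set of undirected edges. -/
noncomputable def edgeLength {V : Type*} (d : ℕ) (E : Finset (Sym2 V))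
    (χ : V → EuclideanSpace ℝ (Fin d)) : ℝ :=
  ∑ e ∈ E, Sym2.lift ⟨fun v w => dist (χ v) (χ w), fun _ _ => dist_comm _ _⟩ e

/-- An immersion is a local minimum of the length functional with `V₀` fixed. -/
def IsLocalMinImmersion {V : Type*} (d : ℕ) (E : Finset (Sym2 V)) (V₀ : Set V)
    (φ : V → EuclideanSpace ℝ (Fin d)) : Prop :=
  ∃ δ > 0, ∀ χ : V → EuclideanSpace ℝ (Fin d),
    (∀ v ∈ V₀, χ v = φ v) → (∀ v, dist (χ v) (φ v) < δ) →
    edgeLength d E φ ≤ edgeLength d E χ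

lemma interp_sub {d : ℕ} (s : ℝ) (φ ψ : EuclideanSpace ℝ (Fin d)) (φ' ψ' : EuclideanSpace ℝ (Fin d)) :
    (φ + s • (ψ - φ)) - (φ' + s • (ψ' - φ')) = (1 - s) • (φ - φ') + s • (ψ - ψ') := by
  simp only [sub_smul, one_smul, smul_sub]
  abel

lemma dist_interp_le {d : ℕ} (s : ℝ) (h0 : 0 ≤ s) (h1 : s ≤ 1)
    (a b a' b' : EuclideanSpace ℝ (Fin d)) :
    dist (a + s • (b - a)) (a' + s • (b' - a')) ≤ (1 - s) * dist a a' + s * dist b b' := by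
  rw [dist_eq_norm, dist_eq_norm, dist_eq_norm, interp_sub]
  calc ‖(1 - s) • (a - a') + s • (b - b')‖
      ≤ ‖(1 - s) • (a - a')‖ + ‖s • (b - b')‖ := norm_add_le _ _
    _ = (1 - s) * ‖a - a'‖ + s * ‖b - b'‖ := by
        rw [norm_smul, norm_smul, Real.norm_eq_abs, Real.norm_eq_abs,
          abs_of_nonneg (by linarith), abs_of_nonneg h0]

lemma edgeLength_interp_le {V : Type*} (d : ℕ) (E : Finset (Sym2 V))
    (φ ψ : V → EuclideanSpace ℝ (Fin d)) (s : ℝ) (h0 : 0 ≤ s) (h1 : s ≤ 1) :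
    edgeLength d E (fun v => φ v + s • (ψ v - φ v)) ≤
      (1 - s) * edgeLength d E φ + s * edgeLength d E ψ := by
  unfold edgeLength
  rw [Finset.mul_sum, Finset.mul_sum, ← Finset.sum_add_distrib]
  refine Finset.sum_le_sum fun e _ => ?_
  induction e using Sym2.ind with
  | _ v w => simpa using dist_interp_le s h0 h1 (φ v) (ψ v) (φ w) (ψ w)

lemma le_aux {V : Type*} [Fintype V] (d : ℕ) (E : Finset (Sym2 V)) (V₀ : Set V)
    (φ ψ : V → EuclideanSpace ℝ (Fin d))
    (hagree : ∀ v ∈ V₀, φ v = ψ v)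
    (hφ : IsLocalMinImmersion d E V₀ φ) :
    edgeLength d E φ ≤ edgeLength d E ψ := by
  obtain ⟨δ, hδ, hmin⟩ := hφ
  set M : ℝ := ∑ v : V, dist (ψ v) (φ v) with hMdef
  have hM : 0 ≤ M := Finset.sum_nonneg fun v _ => dist_nonneg
  set s : ℝ := min (1/2) (δ / (2 * (M + 1))) with hsdef
  have hs0 : 0 < s := lt_min (by norm_num) (div_pos hδ (by linarith))
  have hs1 : s ≤ 1 := le_trans (min_le_left _ _) (by norm_num)
  set χ : V → EuclideanSpace ℝ (Fin d) := fun v => φ v + s • (ψ v - φ v) with hχ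
  have hfix : ∀ v ∈ V₀, χ v = φ v := by
    intro v hv
    simp [hχ, ← hagree v hv]
  have hclose : ∀ v, dist (χ v) (φ v) < δ := by
    intro v
    have h1 : dist (χ v) (φ v) = s * dist (ψ v) (φ v) := by
      rw [dist_eq_norm, dist_eq_norm]
      simp [hχ, norm_smul, abs_of_nonneg hs0.le]
    have h2 : dist (ψ v) (φ v) ≤ M :=
      Finset.single_le_sum (f := fun v => dist (ψ v) (φ v))
        (fun v _ => dist_nonneg) (Finset.mem_univ v)
    have h3 : s * dist (ψ v) (φ v) ≤ s * (M + 1) := by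
      apply mul_le_mul_of_nonneg_left (by linarith) hs0.le
    have h4 : s ≤ δ / (2 * (M + 1)) := min_le_right _ _
    have h5 : s * (M + 1) ≤ δ / 2 := by
      rw [div_mul_eq_div_div] at h4
      calc s * (M + 1) ≤ (δ / 2 / (M + 1)) * (M + 1) := by
            apply mul_le_mul_of_nonneg_right h4 (by linarith)
        _ = δ / 2 := by field_simp
    linarith
  have hle1 : edgeLength d E φ ≤ edgeLength d E χ := hmin χ hfix hclose
  have hle2 : edgeLength d E χ ≤ (1 - s) * edgeLength d E φ + s * edgeLength d E ψ :=
    edgeLength_interp_le d E φ ψ s hs0.le hs1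
  nlinarith [hle1, hle2]

theorem stmt_9 {V : Type*} [Fintype V] (d : ℕ) (E : Finset (Sym2 V)) (V₀ : Set V)
    (φ ψ : V → EuclideanSpace ℝ (Fin d))
    (hagree : ∀ v ∈ V₀, φ v = ψ v)
    (hφ : IsLocalMinImmersion d E V₀ φ) (hψ : IsLocalMinImmersion d E V₀ ψ) :
    edgeLength d E φ = edgeLength d E ψ ∧
    ∀ e ∈ E, ∀ v w : V, e = s(v, w) →
      φ v = φ w ∨ ψ v = ψ w ∨
        ∃ t : ℝ, 0 < t ∧ φ v - φ w = t • (ψ v - ψ w) := by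
  have heq : edgeLength d E φ = edgeLength d E ψ :=
    le_antisymm (le_aux d E V₀ φ ψ hagree hφ)
      (le_aux d E V₀ ψ φ (fun v hv => (hagree v hv).symm) hψ)
  refine ⟨heq, ?_⟩
  obtain ⟨δ, hδ, hmin⟩ := hφ
  set M : ℝ := ∑ v : V, dist (ψ v) (φ v) with hMdef
  have hM : 0 ≤ M := Finset.sum_nonneg fun v _ => dist_nonneg
  set s : ℝ := min (1/2) (δ / (2 * (M + 1))) with hsdef
  have hs0 : 0 < s := lt_min (by norm_num) (div_pos hδ (by linarith))
  have hs1 : s ≤ 1/2 := min_le_left _ _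
  set χ : V → EuclideanSpace ℝ (Fin d) := fun v => φ v + s • (ψ v - φ v) with hχ
  have hfix : ∀ v ∈ V₀, χ v = φ v := by
    intro v hv
    simp [hχ, ← hagree v hv]
  have hclose : ∀ v, dist (χ v) (φ v) < δ := by
    intro v
    have h1 : dist (χ v) (φ v) = s * dist (ψ v) (φ v) := by
      rw [dist_eq_norm, dist_eq_norm]
      simp [hχ, norm_smul, abs_of_nonneg hs0.le]
    have h2 : dist (ψ v) (φ v) ≤ M :=
      Finset.single_le_sum (f := fun v => dist (ψ v) (φ v))
        (fun v _ => dist_nonneg) (Finset.mem_univ v)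
    have h3 : s * dist (ψ v) (φ v) ≤ s * (M + 1) := by
      apply mul_le_mul_of_nonneg_left (by linarith) hs0.le
    have h4 : s ≤ δ / (2 * (M + 1)) := min_le_right _ _
    have h5 : s * (M + 1) ≤ δ / 2 := by
      rw [div_mul_eq_div_div] at h4
      calc s * (M + 1) ≤ (δ / 2 / (M + 1)) * (M + 1) := by
            apply mul_le_mul_of_nonneg_right h4 (by linarith)
        _ = δ / 2 := by field_simp
    linarith
  have hle1 : edgeLength d E φ ≤ edgeLength d E χ := hmin χ hfix hclose
  have hle2 : edgeLength d E χ ≤ (1 - s) * edgeLength d E φ + s * edgeLength d E ψ :=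
    edgeLength_interp_le d E φ ψ s hs0.le (by linarith)
  have hχeq : edgeLength d E χ = (1 - s) * edgeLength d E φ + s * edgeLength d E ψ := by
    apply le_antisymm hle2
    nlinarith [hle1, heq]
  -- termwise equality
  have hterm : ∀ e ∈ E,
      Sym2.lift ⟨fun v w => dist (χ v) (χ w), fun _ _ => dist_comm _ _⟩ e =
        (1 - s) * Sym2.lift ⟨fun v w => dist (φ v) (φ w), fun _ _ => dist_comm _ _⟩ e +
          s * Sym2.lift ⟨fun v w => dist (ψ v) (ψ w), fun _ _ => dist_comm _ _⟩ e := by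
    rw [← Finset.sum_eq_sum_iff_of_le]
    · have : (1 - s) * edgeLength d E φ + s * edgeLength d E ψ =
        ∑ e ∈ E, ((1 - s) * Sym2.lift ⟨fun v w => dist (φ v) (φ w), fun _ _ => dist_comm _ _⟩ e +
          s * Sym2.lift ⟨fun v w => dist (ψ v) (ψ w), fun _ _ => dist_comm _ _⟩ e) := by
        unfold edgeLength
        rw [Finset.mul_sum, Finset.mul_sum, ← Finset.sum_add_distrib]
      rw [← this]
      exact hχeq
    · intro e _
      induction e using Sym2.ind with
      | _ v w => simpa [hχ] using dist_interp_le s hs0.le (by linarith) (φ v) (ψ v) (φ w) (ψ w)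
  intro e he v w hevw
  have hterm' := hterm e he
  rw [hevw] at hterm'
  simp only [Sym2.lift_mk] at hterm'
  set a : EuclideanSpace ℝ (Fin d) := φ v - φ w with ha
  set b : EuclideanSpace ℝ (Fin d) := ψ v - ψ w with hb
  by_cases haz : a = 0
  · exact Or.inl (sub_eq_zero.mp haz)
  by_cases hbz : b = 0
  · exact Or.inr (Or.inl (sub_eq_zero.mp hbz))
  refine Or.inr (Or.inr ?_)
  have hnorm : ‖(1 - s) • a + s • b‖ = ‖(1 - s) • a‖ + ‖s • b‖ := by
    have h1 : dist (χ v) (χ w) = ‖(1 - s) • a + s • b‖ := by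
      rw [dist_eq_norm]
      simp only [hχ, ha, hb]
      rw [interp_sub]
    rw [h1] at hterm'
    rw [norm_smul, norm_smul, Real.norm_eq_abs, Real.norm_eq_abs,
      abs_of_nonneg (by linarith : (0:ℝ) ≤ 1 - s), abs_of_nonneg hs0.le,
      ← dist_eq_norm, ← dist_eq_norm]
    exact hterm'
  have hray : SameRay ℝ ((1 - s) • a) (s • b) := sameRay_iff_norm_add.mpr hnorm
  have h1s' : (0:ℝ) < 1 - s := by linarith
  have h1s : (1 - s) ≠ 0 := h1s'.ne'
  obtain ⟨r, hr, hra⟩ := hray.exists_pos_right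
    (smul_ne_zero h1s haz)
    (smul_ne_zero hs0.ne' hbz)
  refine ⟨(1 - s)⁻¹ * (r * s), mul_pos (inv_pos.2 h1s') (mul_pos hr hs0), ?_⟩
  calc a = (1 - s)⁻¹ • ((1 - s) • a) := by rw [inv_smul_smul₀ h1s]
    _ = (1 - s)⁻¹ • (r • s • b) := by rw [hra]
    _ = ((1 - s)⁻¹ * (r * s)) • b := by rw [smul_smul, smul_smul, mul_assoc]
end

section
/- Let S be a finite full* immersed tree in ℂ with vertex positions v₁,…,v_{n+t}, where v₁,…,v_n are the vertices of degree at most 2 and the other t vertices are branching points at which the sum of outgoing unit edge directions is zero. For each k ≤ n let c_k be the unit complex number such that the sum of outgoing unit directions at v_k equals −c_k. Then the total length Σ_{(k,j)∈E} |v_k − v_j| equals Σ_{k=1}^n Re(conj(c_k) · v_k) = Σ_{k=1}^n conj(c_k) v_k (the latter sum being real). -/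
open Finset

/-!
Write `u v w = (pos w - pos v) / |pos w - pos v|` for the unit direction of the dart `v → w`.
Since `u w v = -u v w` and `conj (u v w) * (pos w - pos v) = |pos w - pos v|`, the length of the
edge `{v, w}` splits as `f v w + f w v` with `f v w = -conj (u v w) * pos v`. Summing over all
darts and regrouping by the tail vertex gives `-∑ᵥ conj (∑_w u v w) * pos v`; the inner sums
vanish at branching points and equal `-c k` at the terminal vertices.
-/

namespace SimpleGraph

variable {V M : Type*} [Fintype V] [DecidableEq V] [AddCommMonoid M]
  (G : SimpleGraph V) [DecidableRel G.Adj]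

theorem sum_darts_eq_sum_neighborFinset (f : V → V → M) :
    ∑ d : G.Dart, f d.fst d.snd = ∑ v, ∑ w ∈ G.neighborFinset v, f v w := by
  rw [← sum_fiberwise_of_maps_to (g := fun d : G.Dart => d.fst) (fun _ _ => mem_univ _)]
  refine sum_congr rfl fun v _ => ?_
  rw [dart_fst_fiber, sum_image fun _ _ _ _ h => dartOfNeighborSet_injective G v h,
    sum_subtype _ (G.mem_neighborFinset v)]
  rfl

theorem sum_darts_eq_sum_edgeFinset (f : V → V → M) :
    ∑ d : G.Dart, f d.fst d.snd =
      ∑ e ∈ G.edgeFinset,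
        Sym2.lift ⟨fun v w => f v w + f w v, fun _ _ => add_comm _ _⟩ e := by
  rw [← sum_fiberwise_of_maps_to (g := Dart.edge) fun d _ => mem_edgeFinset.2 d.edge_mem]
  refine sum_congr rfl fun e he => ?_
  induction e with
  | _ v w =>
    let d : G.Dart := ⟨(v, w), mem_edgeFinset.1 he⟩
    rw [show s(v, w) = d.edge from rfl, d.edge_fiber, sum_pair d.symm_ne.symm]
    rfl

end SimpleGraph

theorem Complex.conj_div_norm_mul_self (z : ℂ) :
    (starRingEnd ℂ) (z / (‖z‖ : ℂ)) * z = ‖z‖ := by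
  rw [map_div₀, Complex.conj_ofReal, div_mul_eq_mul_div, Complex.conj_mul', sq,
    mul_self_div_self]

theorem sum_edgeFinset_dist_eq_neg_sum_conj_mul {V : Type*} [Fintype V] [DecidableEq V]
    (G : SimpleGraph V) [DecidableRel G.Adj] (pos : V → ℂ) :
    ((∑ e ∈ G.edgeFinset,
        Sym2.lift ⟨fun v w => dist (pos v) (pos w), fun _ _ => dist_comm _ _⟩ e : ℝ) : ℂ) =
      -∑ v, (starRingEnd ℂ)
        (∑ w ∈ G.neighborFinset v, (pos w - pos v) / (‖pos w - pos v‖ : ℂ)) * pos v := by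
  let f : V → V → ℂ := fun v w =>
    -((starRingEnd ℂ) ((pos w - pos v) / (‖pos w - pos v‖ : ℂ)) * pos v)
  have length_eq (v w : V) : (dist (pos v) (pos w) : ℂ) = f v w + f w v := by
    simp only [f, Complex.dist_eq, ← neg_sub (pos w), norm_neg, neg_div, map_neg]
    linear_combination -Complex.conj_div_norm_mul_self (pos w - pos v)
  calc _ = ∑ e ∈ G.edgeFinset,
          Sym2.lift ⟨fun v w => f v w + f w v, fun _ _ => add_comm _ _⟩ e := by
        push_cast
        refine sum_congr rfl fun e _ => ?_
        induction e with
        | _ v w => exact length_eq v w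
    _ = ∑ v, ∑ w ∈ G.neighborFinset v, f v w := by
        rw [← G.sum_darts_eq_sum_edgeFinset, G.sum_darts_eq_sum_neighborFinset]
    _ = _ := by simp only [f, map_sum, sum_mul, sum_neg_distrib]

theorem stmt_10_general {V : Type*} [Fintype V] [DecidableEq V]
    (G : SimpleGraph V) [DecidableRel G.Adj] (pos : V → ℂ)
    (T : Finset V) (c : V → ℂ)
    (hterm : ∀ k ∈ T,
      ∑ w ∈ G.neighborFinset k, (pos w - pos k) / (‖pos w - pos k‖ : ℂ)
        = -c k)
    (hbranch : ∀ v : V, v ∉ T →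
      ∑ w ∈ G.neighborFinset v, (pos w - pos v) / (‖pos w - pos v‖ : ℂ)
        = 0) :
    (∑ e ∈ G.edgeFinset,
        Sym2.lift ⟨fun v w => dist (pos v) (pos w), fun _ _ => dist_comm _ _⟩ e)
      = (∑ k ∈ T, (starRingEnd ℂ) (c k) * pos k).re ∧
    (∑ k ∈ T, (starRingEnd ℂ) (c k) * pos k).im = 0 := by
  have length_sum_eq : ((∑ e ∈ G.edgeFinset,
        Sym2.lift ⟨fun v w => dist (pos v) (pos w), fun _ _ => dist_comm _ _⟩ e : ℝ) : ℂ) =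
      ∑ k ∈ T, (starRingEnd ℂ) (c k) * pos k := by
    rw [sum_edgeFinset_dist_eq_neg_sum_conj_mul,
      ← sum_subset (subset_univ T) fun v _ hv => by rw [hbranch v hv]; simp, ← sum_neg_distrib]
    exact sum_congr rfl fun k hk => by rw [hterm k hk]; simp
  rw [← length_sum_eq]
  exact ⟨(Complex.ofReal_re _).symm, Complex.ofReal_im _⟩

/-- Maxwell-type length formula for a full* immersed graph in `ℂ`:
if at every non-terminal vertex the outgoing unit directions sum to `0`,
and at every terminal vertex `k` they sum to `-c k` with `|c k| = 1`, then
the total length equals `∑ₖ Re(conj (c k) * pos k)` and this sum is real. -/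
theorem stmt_10 {V : Type*} [Fintype V] [DecidableEq V]
    (G : SimpleGraph V) [DecidableRel G.Adj] (pos : V → ℂ)
    (T : Finset V) (c : V → ℂ)
    (hnd : ∀ v w : V, G.Adj v w → pos v ≠ pos w)
    (hdeg : ∀ k ∈ T, G.degree k ≤ 2)
    (hc : ∀ k ∈ T, ‖c k‖ = 1)
    (hterm : ∀ k ∈ T,
      ∑ w ∈ G.neighborFinset k, (pos w - pos k) / (‖pos w - pos k‖ : ℂ)
        = -c k)
    (hbranch : ∀ v : V, v ∉ T →
      ∑ w ∈ G.neighborFinset v, (pos w - pos v) / (‖pos w - pos v‖ : ℂ)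
        = 0) :
    (∑ e ∈ G.edgeFinset,
        Sym2.lift ⟨fun v w => dist (pos v) (pos w), fun _ _ => dist_comm _ _⟩ e)
      = (∑ k ∈ T, (starRingEnd ℂ) (c k) * pos k).re ∧
    (∑ k ∈ T, (starRingEnd ℂ) (c k) * pos k).im = 0 :=
  stmt_10_general G pos T c hterm hbranch
end

section
/- Among subsets J ⊆ ℕ satisfying 1 ∈ J and containing at least one of {j, j+1} for every j ∈ ℕ, the quantity |Σ_{j∈J} λ^j − Σ_{j∈ℕ∖J} λ^j| is minimized (for 0 < λ ≤ 1/2) by J = {1, 3, 5, …} = the set of odd positive integers, i.e. for every admissible J, |Σ_{j∈J} λ^j − Σ_{j∉J} λ^j| ≥ |Σ_{j odd} λ^j − Σ_{j even} λ^j| = λ(1−λ)/(1−λ²)·... = λ/(1+λ). -/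
/-! Write `S = ∑_{j ≥ 1} λ^j = λ/(1-λ)`, so the difference for `J` is `2 ∑_{j ∈ J} λ^j - S`.
Since `1 ∈ J` and `J` meets every pair `{2k, 2k+1}` with `k ≥ 1`, there is a strictly increasing
`φ : ℕ → J` with `φ k ≤ 2k+1`; as `λ^j` decreases in `j`, this gives
`∑_{j ∈ J} λ^j ≥ ∑_k λ^(2k+1) = λ/(1-λ²)`, and `2λ/(1-λ²) - λ/(1-λ) = λ/(1+λ)`. The odd set
attains the bound since its complement in `{j ≥ 1}` contributes `λ²/(1-λ²)`. -/

lemma tsum_pow_mul_add {lam : ℝ} (h0 : 0 ≤ lam) (h1 : lam < 1) {a : ℕ} (ha : a ≠ 0) (b : ℕ) :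
    ∑' k : ℕ, lam ^ (a * k + b) = lam ^ b / (1 - lam ^ a) := by
  have hlt : lam ^ a < 1 := pow_lt_one₀ h0 h1 ha
  simp_rw [pow_add, pow_mul, mul_comm _ (lam ^ b)]
  rw [tsum_mul_left, tsum_geometric_of_lt_one (by positivity) hlt, div_eq_mul_inv]

lemma tsum_pow_range_mul_add {lam : ℝ} (h0 : 0 ≤ lam) (h1 : lam < 1) {a : ℕ} (ha : a ≠ 0)
    (b : ℕ) :
    ∑' j : Set.range (fun k ↦ a * k + b), lam ^ (j : ℕ) = lam ^ b / (1 - lam ^ a) := by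
  rw [tsum_range (fun j ↦ lam ^ j) fun k l h ↦ by simpa [ha] using h,
    tsum_pow_mul_add h0 h1 ha]

lemma tsum_pow_odd {lam : ℝ} (h0 : 0 ≤ lam) (h1 : lam < 1) :
    ∑' j : {j : ℕ | Odd j}, lam ^ (j : ℕ) = lam / (1 - lam ^ 2) := by
  have hodd : {j : ℕ | Odd j} = Set.range (fun k ↦ 2 * k + 1) := by
    ext j; simp [Odd]
  rw [hodd, tsum_pow_range_mul_add h0 h1 two_ne_zero, pow_one]

lemma tsum_pow_pos_even {lam : ℝ} (h0 : 0 ≤ lam) (h1 : lam < 1) :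
    ∑' j : {j : ℕ | 1 ≤ j ∧ Even j}, lam ^ (j : ℕ) = lam ^ 2 / (1 - lam ^ 2) := by
  have heven : {j : ℕ | 1 ≤ j ∧ Even j} = Set.range (fun k ↦ 2 * k + 2) := by
    ext j
    simp only [Set.mem_ofPred_eq, Set.mem_range, Nat.even_iff]
    constructor
    · rintro ⟨hj, hj2⟩; exact ⟨j / 2 - 1, by omega⟩
    · rintro ⟨k, rfl⟩; omega
  rw [heven, tsum_pow_range_mul_add h0 h1 two_ne_zero]

lemma tsum_pow_pos {lam : ℝ} (h0 : 0 ≤ lam) (h1 : lam < 1) :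
    ∑' j : {j : ℕ | 1 ≤ j}, lam ^ (j : ℕ) = lam / (1 - lam) := by
  have hpos : {j : ℕ | 1 ≤ j} = Set.range (fun k ↦ 1 * k + 1) := by
    ext j
    simp only [Set.mem_ofPred_eq, Set.mem_range]
    constructor
    · intro hj; exact ⟨j - 1, by omega⟩
    · rintro ⟨k, rfl⟩; omega
  rw [hpos, tsum_pow_range_mul_add h0 h1 one_ne_zero, pow_one]

lemma Summable.tsum_add_tsum_diff_of_subset {β : Type*} {f : β → ℝ} (hf : Summable f)
    {s t : Set β} (hst : s ⊆ t) :
    ∑' j : s, f j + ∑' j : ↑(t \ s), f j = ∑' j : t, f j := by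
  rw [← hf.subtype s |>.tsum_union_disjoint Set.disjoint_sdiff_right (hf.subtype _),
    Set.union_sdiff_cancel hst]

lemma exists_strictMono_mem_le_two_mul_add_one {J : Set ℕ} (hone : 1 ∈ J)
    (hcons : ∀ j : ℕ, 1 ≤ j → j ∈ J ∨ j + 1 ∈ J) :
    ∃ φ : ℕ → ℕ, StrictMono φ ∧ (∀ k, φ k ∈ J) ∧ ∀ k, φ k ≤ 2 * k + 1 := by
  have hpick : ∀ k : ℕ, ∃ m ∈ J, 2 * k ≤ m ∧ m ≤ 2 * k + 1 := by
    rintro (_ | k)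
    · exact ⟨1, hone, by omega, by omega⟩
    · rcases hcons (2 * (k + 1)) (by omega) with h | h
      exacts [⟨_, h, by omega, by omega⟩, ⟨_, h, by omega, by omega⟩]
  choose φ hφJ hφ using hpick
  refine ⟨φ, strictMono_nat_of_lt_succ fun k ↦ ?_, hφJ, fun k ↦ (hφ k).2⟩
  have := (hφ k).2
  have := (hφ (k + 1)).1
  omega

lemma tsum_comp_two_mul_add_one_le {f : ℕ → ℝ} (hf : Summable f) (hf0 : 0 ≤ f)
    (hanti : Antitone f) {J : Set ℕ} (hone : 1 ∈ J)
    (hcons : ∀ j : ℕ, 1 ≤ j → j ∈ J ∨ j + 1 ∈ J) :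
    ∑' k : ℕ, f (2 * k + 1) ≤ ∑' j : J, f j := by
  obtain ⟨φ, hmono, hJ, hφ⟩ := exists_strictMono_mem_le_two_mul_add_one hone hcons
  refine Summable.tsum_le_tsum_of_inj (fun k ↦ (⟨φ k, hJ k⟩ : J))
    (fun k l h ↦ hmono.injective (congrArg Subtype.val h)) (fun j _ ↦ hf0 j)
    (fun k ↦ hanti (hφ k)) ?_ (hf.subtype J)
  exact hf.comp_injective fun k l h ↦ by simpa using h

theorem stmt_15 (lam : ℝ) (h0 : 0 < lam) (h1 : lam ≤ 1 / 2)
    (J : Set ℕ) (hpos : ∀ j ∈ J, 1 ≤ j) (hone : 1 ∈ J)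
    (hcons : ∀ j : ℕ, 1 ≤ j → j ∈ J ∨ j + 1 ∈ J) :
    lam / (1 + lam) ≤
      |(∑' j : J, lam ^ (j : ℕ))
        - ∑' j : {j : ℕ | 1 ≤ j ∧ j ∉ J}, lam ^ (j : ℕ)| ∧
    |(∑' j : {j : ℕ | Odd j}, lam ^ (j : ℕ))
        - ∑' j : {j : ℕ | 1 ≤ j ∧ Even j}, lam ^ (j : ℕ)|
      = lam / (1 + lam) := by
  have hlt : lam < 1 := by linarith
  have hsum : Summable (lam ^ · : ℕ → ℝ) := summable_geometric_of_lt_one h0.le hlt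
  have hsplit : ∑' j : J, lam ^ (j : ℕ) + ∑' j : {j : ℕ | 1 ≤ j ∧ j ∉ J}, lam ^ (j : ℕ) =
      lam / (1 - lam) := by
    rw [← tsum_pow_pos h0.le hlt]
    exact hsum.tsum_add_tsum_diff_of_subset hpos
  have hlow : lam / (1 - lam ^ 2) ≤ ∑' j : J, lam ^ (j : ℕ) := by
    have := tsum_comp_two_mul_add_one_le hsum (fun j ↦ pow_nonneg h0.le j)
      (fun _ _ ↦ pow_le_pow_of_le_one h0.le hlt.le) hone hcons
    rwa [tsum_pow_mul_add h0.le hlt two_ne_zero, pow_one] at this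
  have h1m : 1 - lam ≠ 0 := by linarith
  have h1sq : 1 - lam ^ 2 ≠ 0 := by nlinarith
  rw [tsum_pow_odd h0.le hlt, tsum_pow_pos_even h0.le hlt]
  constructor
  · calc lam / (1 + lam) = 2 * (lam / (1 - lam ^ 2)) - lam / (1 - lam) := by
          field_simp; ring
      _ ≤ _ := by linarith
      _ ≤ _ := le_abs_self _
  · rw [show lam / (1 - lam ^ 2) - lam ^ 2 / (1 - lam ^ 2) = lam / (1 + lam) by
      field_simp; ring]
    exact abs_of_pos (by positivity)
end

section
/- Let A_∞ = 0 ∈ ℂ, and for k ≥ 1 let A_k = λ^{k−1} e^{iα} and B_k = λ^{k−1} e^{−iα} with 0 < λ ≤ 1/2 and 0 < α < π/6. Let C = cos α + √3 sin α (the Melzak point of A₁ and B₁, apex of the equilateral triangle on [A₁B₁] away from A_∞). Then the angle ∠A₂ C B₂ is strictly smaller than the angle ∠A₂ A_∞ B₂ = 2α. -/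
/-!
`B₂ = conj A₂` and `C` is real, so both angles are angles between a vector `w` and `conj w`,
whose cosine `(re² - im²) / (re² + im²)` decreases in `im² / re²`. The vectors `A₂ - 0` and
`A₂ - C` have the same imaginary part, and `|Re (A₂ - C)| > |Re A₂|` because
`C > 2 lam cos α` when `lam ≤ 1 / 2`.
-/

open EuclideanGeometry Complex ComplexConjugate

namespace Complex

lemma angle_conj_eq_arccos (w : ℂ) :
    InnerProductGeometry.angle w (conj w) =
      Real.arccos ((w.re ^ 2 - w.im ^ 2) / (w.re ^ 2 + w.im ^ 2)) := by
  have hinner : inner ℝ w (conj w) = w.re ^ 2 - w.im ^ 2 := by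
    simp [Complex.inner, mul_re]; ring
  have hnorm : ‖w‖ * ‖conj w‖ = w.re ^ 2 + w.im ^ 2 := by
    rw [norm_conj, ← sq, Complex.sq_norm, normSq_apply]; ring
  rw [InnerProductGeometry.angle, hinner, hnorm]

lemma angle_conj_lt_angle_conj {w z : ℂ} (him : w.im = z.im) (hne : z.im ≠ 0)
    (hre : |z.re| < |w.re|) :
    InnerProductGeometry.angle w (conj w) < InnerProductGeometry.angle z (conj z) := by
  rw [angle_conj_eq_arccos, angle_conj_eq_arccos, him]
  have ht : 0 < z.im ^ 2 := by positivity
  have hsq : z.re ^ 2 < w.re ^ 2 := sq_lt_sq.mpr hre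
  have hz : 0 < z.re ^ 2 + z.im ^ 2 := by positivity
  have hw : 0 < w.re ^ 2 + z.im ^ 2 := by positivity
  refine Real.arccos_lt_arccos ?_ ?_ ?_
  · rw [le_div_iff₀ hz]; nlinarith
  · rw [div_lt_div_iff₀ hz hw]; nlinarith
  · rw [div_le_one hw]; linarith

lemma angle_mul_exp_mul_I_mul_exp_neg_mul_I {r : ℂ} {α : ℝ} (hr : r ≠ 0) (hα : 0 ≤ α)
    (hαπ : α ≤ Real.pi / 2) :
    InnerProductGeometry.angle (r * exp (α * I)) (r * exp (-α * I)) = 2 * α := by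
  rw [angle_mul_left hr, ← ofReal_neg, angle_exp_exp, sub_neg_eq_add, ← two_mul,
    toIocMod_eq_self _ |>.mpr ⟨by linarith [Real.pi_pos], by linarith⟩,
    abs_of_nonneg (by linarith)]

end Complex

/-- The Melzak point `C` of `A₁, B₁` sees the pair `A₂, B₂` under an angle
strictly smaller than the angle `∠ A₂ A_∞ B₂ = 2α` at the vertex `A_∞ = 0`. -/
theorem stmt_19 (α lam : ℝ) (hα : 0 < α) (hα6 : α < Real.pi / 6)
    (hl : 0 < lam) (hl2 : lam ≤ 1 / 2)
    (A₂ B₂ C : ℂ)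
    (hA₂ : A₂ = (lam : ℂ) * Complex.exp ((α : ℂ) * Complex.I))
    (hB₂ : B₂ = (lam : ℂ) * Complex.exp (-(α : ℂ) * Complex.I))
    (hC : C = ((Real.cos α + Real.sqrt 3 * Real.sin α : ℝ) : ℂ)) :
    ∠ A₂ C B₂ < ∠ A₂ (0 : ℂ) B₂ ∧ ∠ A₂ (0 : ℂ) B₂ = 2 * α := by
  have hsin : 0 < Real.sin α := Real.sin_pos_of_pos_of_lt_pi hα (by linarith [Real.pi_pos])
  have hcos : 0 < Real.cos α :=
    Real.cos_pos_of_mem_Ioo ⟨by linarith [Real.pi_pos], by linarith⟩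
  have hB₂_conj : B₂ = conj A₂ := by
    rw [hA₂, hB₂, map_mul, conj_ofReal, ← exp_conj, map_mul, conj_ofReal, conj_I, mul_neg,
      neg_mul]
  have hA₂_re : A₂.re = lam * Real.cos α := by rw [hA₂, re_ofReal_mul, exp_ofReal_mul_I_re]
  have hA₂_im : A₂.im = lam * Real.sin α := by rw [hA₂, im_ofReal_mul, exp_ofReal_mul_I_im]
  have hangle_zero : ∠ A₂ (0 : ℂ) B₂ = 2 * α := by
    simp only [EuclideanGeometry.angle, vsub_eq_sub, sub_zero, hA₂, hB₂]
    exact angle_mul_exp_mul_I_mul_exp_neg_mul_I (by exact_mod_cast hl.ne') hα.le (by linarith)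
  have hfar : |A₂.re| < |(A₂ - C).re| := by
    have hsqrt3_sin : 0 < Real.sqrt 3 * Real.sin α := by positivity
    rw [sub_re, hC, ofReal_re, hA₂_re, abs_of_pos (by positivity), abs_sub_comm,
      abs_of_pos (by nlinarith)]
    nlinarith
  refine ⟨?_, hangle_zero⟩
  have hconj : B₂ - C = conj (A₂ - C) := by rw [map_sub, ← hB₂_conj, hC, conj_ofReal]
  simp only [EuclideanGeometry.angle, vsub_eq_sub, sub_zero]
  rw [hconj, hB₂_conj]
  refine angle_conj_lt_angle_conj ?_ (by rw [hA₂_im]; positivity) hfar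
  rw [sub_im, hC, ofReal_im, sub_zero]
end
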